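/- Let U₁, U₂ ∈ ℝ^{n×d} be semi-orthogonal, let Λⱼ = diag(λ_{j,1},…,λ_{j,d}) (j = 1,2) have nonnegative entries with λ_{j,1} the largest, let σ² > 0, set Σⱼ = UⱼΛⱼUⱼᵀ + σ²·Iₙ, and define the Bhattacharyya exponent K = (1/2)·log det((Σ₁+Σ₂)/2) − (1/4)·(log det Σ₁ + log det Σ₂). Let D = (U₁Λ₁U₁ᵀ + U₂Λ₂U₂ᵀ)/(2σ²), let m be the number of nonzero eigenvalues of D (counted with multiplicity), and suppose p > 1 and 0 ≤ L < (p−1)/2 are such that (i) log(1+λ) ≥ log(1+p) + (λ−p)/(1+p) − (λ−p)²/(1+p)² for every λ ∈ [L, p], and (ii) every nonzero eigenvalue of D lies in [L, p]. Then K ≥ c₄·m − (λ_{1,1}·λ_{2,1}/(4σ⁴(1+p)²))·trace(U₁ᵀU₂U₂ᵀU₁) − c₅, where c₄ = (1/2)·[log(1+p) − p/(1+p) − p²/(1+p)²] and c₅ = −((1+3p)/(4σ²(1+p)²))·Σᵢ(λ_{1,i} + λ_{2,i}) + (Σᵢ λ_{1,i}² + Σᵢ λ_{2,i}²)/(8σ⁴(1+p)²)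 + (1/4)·Σᵢ[log(1 + λ_{1,i}/σ²) + log(1 + λ_{2,i}/σ²)]. Consequently the Bhattacharyya bound satisfies (1/2)·e^{−K} ≤ (1/2)·exp{−c₄·m + (λ_{1,1}λ_{2,1}/(4σ⁴(1+p)²))·trace(U₁ᵀU₂U₂ᵀU₁) + c₅}. -/

import Mathlib

/-!
Since both covariances share the noise floor, `(Σ₁ + Σ₂)/2 = σ²(1 + D)`, and since `Uⱼ` is
semi-orthogonal, `det Σⱼ = σ^{2n} ∏ᵢ (1 + λⱼᵢ/σ²)`. The powers of `σ²` cancel in `K`, leaving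
`K = ½ ∑ log (1 + μᵢ) − ¼ ∑ᵢ (log (1 + λ₁ᵢ/σ²) + log (1 + λ₂ᵢ/σ²))` over the eigenvalues `μ` of `D`.
Hypothesis (i) bounds every `log (1 + μᵢ)` with `μᵢ ≠ 0` from below by a quadratic in `μᵢ`, so the
sum is controlled by `m`, `tr D` and `tr D²`. With `Aⱼ = UⱼΛⱼUⱼᵀ`, these traces are explicit in the
`λ`s except for the cross term `tr (A₁A₂) = ∑ᵢⱼ λ₁ᵢ λ₂ⱼ ((U₁ᵀU₂)ᵢⱼ)²`, which is at most
`λ₁₁ λ₂₁ tr (U₁ᵀU₂U₂ᵀU₁)`.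
-/

open Matrix Real

namespace Matrix

section SemiOrthogonal

variable {m k R : Type*} [Fintype m] [Fintype k]

theorem trace_mul_transpose_mul_mul_transpose [CommSemiring R] (U₁ U₂ : Matrix m k R)
    (A B : Matrix k k R) :
    (U₁ * A * U₁ᵀ * (U₂ * B * U₂ᵀ)).trace = (A * (U₁ᵀ * U₂) * B * (U₁ᵀ * U₂)ᵀ).trace := by
  rw [transpose_mul, transpose_transpose]
  simp only [Matrix.mul_assoc]
  rw [trace_mul_comm U₁]
  simp only [Matrix.mul_assoc]

variable [DecidableEq k]

theorem trace_mul_diagonal_mul_transpose [CommSemiring R] {U : Matrix m k R} (hU : Uᵀ * U = 1)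
    (l : k → R) : (U * diagonal l * Uᵀ).trace = ∑ i, l i := by
  rw [trace_mul_cycle, hU, one_mul, trace_diagonal]

theorem mul_diagonal_mul_transpose_mul_self [CommSemiring R] {U : Matrix m k R}
    (hU : Uᵀ * U = 1) (l : k → R) :
    U * diagonal l * Uᵀ * (U * diagonal l * Uᵀ) = U * diagonal (fun i ↦ l i ^ 2) * Uᵀ := by
  simp only [Matrix.mul_assoc]
  rw [← Matrix.mul_assoc Uᵀ, hU, Matrix.one_mul, ← Matrix.mul_assoc (diagonal l),
    diagonal_mul_diagonal]
  simp only [sq]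

theorem det_mul_diagonal_mul_transpose_add_smul_one [Field R] [DecidableEq m] {U : Matrix m k R}
    (hU : Uᵀ * U = 1) (l : k → R) {s : R} (hs : s ≠ 0) :
    (U * diagonal l * Uᵀ + s • 1).det = s ^ Fintype.card m * ∏ i, (1 + l i / s) := by
  have h : U * diagonal l * Uᵀ + s • 1 = s • (1 + U * (diagonal fun i ↦ l i / s) * Uᵀ) := by
    rw [smul_add, add_comm, ← Matrix.smul_mul, ← Matrix.mul_smul, ← diagonal_smul]
    congr
    funext i
    exact (mul_div_cancel₀ _ hs).symm
  rw [h, det_smul, det_one_add_mul_comm, ← Matrix.mul_assoc, hU, Matrix.one_mul,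
    ← diagonal_one, diagonal_add, det_diagonal]

end SemiOrthogonal

section Diagonal

variable {k k' R : Type*} [Fintype k] [Fintype k'] [DecidableEq k] [DecidableEq k']

theorem trace_diagonal_mul_mul_diagonal_mul_transpose [CommSemiring R] (a : k → R)
    (M : Matrix k k' R) (b : k' → R) :
    (diagonal a * M * diagonal b * Mᵀ).trace = ∑ i, ∑ j, a i * b j * M i j ^ 2 := by
  simp only [trace, diag, mul_apply, transpose_apply, diagonal_apply, ite_mul, zero_mul,
    mul_ite, mul_zero, Finset.sum_ite_eq, Finset.sum_ite_eq', Finset.mem_univ, if_true]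
  exact Finset.sum_congr rfl fun i _ ↦ Finset.sum_congr rfl fun j _ ↦ by ring

theorem trace_mul_transpose_self [CommSemiring R] (M : Matrix k k' R) :
    (M * Mᵀ).trace = ∑ i, ∑ j, M i j ^ 2 := by
  simpa using trace_diagonal_mul_mul_diagonal_mul_transpose 1 M 1

theorem trace_diagonal_mul_mul_diagonal_mul_transpose_le [CommRing R] [LinearOrder R]
    [IsStrictOrderedRing R] {a : k → R} {b : k' → R} {α β : R}
    (ha₀ : ∀ i, 0 ≤ a i) (ha : ∀ i, a i ≤ α) (hb₀ : ∀ j, 0 ≤ b j) (hb : ∀ j, b j ≤ β)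
    (M : Matrix k k' R) :
    (diagonal a * M * diagonal b * Mᵀ).trace ≤ α * β * (M * Mᵀ).trace := by
  rw [trace_diagonal_mul_mul_diagonal_mul_transpose, trace_mul_transpose_self, Finset.mul_sum]
  refine Finset.sum_le_sum fun i _ ↦ ?_
  rw [Finset.mul_sum]
  refine Finset.sum_le_sum fun j _ ↦ ?_
  have hab : a i * b j ≤ α * β := mul_le_mul (ha i) (hb j) (hb₀ j) ((ha₀ i).trans (ha i))
  exact mul_le_mul_of_nonneg_right hab (sq_nonneg _)

end Diagonal

namespace IsHermitian

variable {n 𝕜 : Type*} [Fintype n] [DecidableEq n] [RCLike 𝕜] {A : Matrix n n 𝕜}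

theorem det_one_add (hA : A.IsHermitian) : (1 + A).det = ∏ i, (1 + (hA.eigenvalues i : 𝕜)) := by
  conv_lhs => rw [hA.spectral_theorem,
    ← map_one (Unitary.conjStarAlgAut 𝕜 _ hA.eigenvectorUnitary), ← map_add,
    Unitary.conjStarAlgAut_apply, det_mul_right_comm, ← Unitary.coe_star,
    Unitary.coe_mul_star_self, one_mul]
  rw [← diagonal_one, diagonal_add, det_diagonal]
  rfl

theorem trace_mul_self (hA : A.IsHermitian) :
    (A * A).trace = ∑ i, (hA.eigenvalues i : 𝕜) ^ 2 := by
  conv_lhs => rw [hA.spectral_theorem, ← map_mul, Unitary.conjStarAlgAut_apply, trace_mul_cycle,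
    Unitary.coe_star_mul_self, one_mul]
  rw [diagonal_mul_diagonal, trace_diagonal]
  simp [sq]

end IsHermitian

end Matrix

theorem Real.log_pow_mul_prod {ι : Type*} [Fintype ι] {s : ℝ} (hs : s ≠ 0) (n : ℕ) {f : ι → ℝ}
    (hf : ∀ i, f i ≠ 0) : log (s ^ n * ∏ i, f i) = n * log s + ∑ i, log (f i) := by
  rw [log_mul (pow_ne_zero _ hs) (Finset.prod_ne_zero_iff.2 fun i _ ↦ hf i), log_pow,
    log_prod fun i _ ↦ hf i]

theorem Matrix.log_det_mul_diagonal_mul_transpose_add_smul_one {m k : Type*} [Fintype m]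
    [DecidableEq m] [Fintype k] [DecidableEq k] {U : Matrix m k ℝ} (hU : Uᵀ * U = 1)
    {l : k → ℝ} (hl : ∀ i, 0 ≤ l i) {s : ℝ} (hs : 0 < s) :
    log (U * diagonal l * Uᵀ + s • 1).det =
      Fintype.card m * log s + ∑ i, log (1 + l i / s) := by
  rw [det_mul_diagonal_mul_transpose_add_smul_one hU l hs.ne',
    Real.log_pow_mul_prod hs.ne' _ fun i ↦ by have := hl i; positivity]

theorem le_sum_log_one_add {ι : Type*} [Fintype ι] {μ : ι → ℝ} {L p : ℝ} (hp : 1 + p ≠ 0)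
    (hlog : ∀ x ∈ Set.Icc L p,
      log (1 + x) ≥ log (1 + p) + (x - p) / (1 + p) - (x - p) ^ 2 / (1 + p) ^ 2)
    (hμ : ∀ i, μ i ≠ 0 → μ i ∈ Set.Icc L p) :
    (log (1 + p) - p / (1 + p) - p ^ 2 / (1 + p) ^ 2) * (Finset.univ.filter (μ · ≠ 0)).card +
        ((1 + 3 * p) / (1 + p) ^ 2 * ∑ i, μ i - (∑ i, μ i ^ 2) / (1 + p) ^ 2) ≤
      ∑ i, log (1 + μ i) := by
  rw [← Finset.sum_boole, Finset.mul_sum, Finset.mul_sum, Finset.sum_div,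
    ← Finset.sum_sub_distrib, ← Finset.sum_add_distrib]
  refine Finset.sum_le_sum fun i _ ↦ ?_
  by_cases h : μ i = 0
  · simp [h]
  · have hquad : log (1 + p) + (μ i - p) / (1 + p) - (μ i - p) ^ 2 / (1 + p) ^ 2 =
        (log (1 + p) - p / (1 + p) - p ^ 2 / (1 + p) ^ 2) * 1 +
          ((1 + 3 * p) / (1 + p) ^ 2 * μ i - μ i ^ 2 / (1 + p) ^ 2) := by
      field_simp
      ring
    rw [if_pos h, ← hquad]
    exact hlog (μ i) (hμ i h)

theorem stmt_11_general {n d : ℕ} (U₁ U₂ : Matrix (Fin n) (Fin (d + 1)) ℝ)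
    (hU₁ : U₁ᵀ * U₁ = 1) (hU₂ : U₂ᵀ * U₂ = 1)
    (l₁ l₂ : Fin (d + 1) → ℝ)
    (hl₁0 : ∀ i, 0 ≤ l₁ i) (hl₂0 : ∀ i, 0 ≤ l₂ i)
    (hl₁max : ∀ i, l₁ i ≤ l₁ 0) (hl₂max : ∀ i, l₂ i ≤ l₂ 0)
    (s : ℝ) (hs : 0 < s)
    (S₁ S₂ D : Matrix (Fin n) (Fin n) ℝ)
    (hS₁ : S₁ = U₁ * Matrix.diagonal l₁ * U₁ᵀ + s • 1)
    (hS₂ : S₂ = U₂ * Matrix.diagonal l₂ * U₂ᵀ + s • 1)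
    (hD : D = (2 * s)⁻¹ • (U₁ * Matrix.diagonal l₁ * U₁ᵀ + U₂ * Matrix.diagonal l₂ * U₂ᵀ))
    (hDh : D.IsHermitian)
    (m : ℕ)
    (hm : m = (Finset.univ.filter (fun i => hDh.eigenvalues i ≠ 0)).card)
    (p L : ℝ) (hp : 1 < p) (hL0 : 0 ≤ L)
    (hlog : ∀ l ∈ Set.Icc L p,
        Real.log (1 + l) ≥
          Real.log (1 + p) + (l - p) / (1 + p) - (l - p) ^ 2 / (1 + p) ^ 2)
    (heig : ∀ i, hDh.eigenvalues i ≠ 0 → hDh.eigenvalues i ∈ Set.Icc L p)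
    (K c₄ c₅ : ℝ)
    (hK : K = (1 / 2) * Real.log ((((2:ℝ)⁻¹) • (S₁ + S₂)).det) -
        (1 / 4) * (Real.log S₁.det + Real.log S₂.det))
    (hc₄ : c₄ = (1 / 2) * (Real.log (1 + p) - p / (1 + p) - p ^ 2 / (1 + p) ^ 2))
    (hc₅ : c₅ = -((1 + 3 * p) / (4 * s * (1 + p) ^ 2)) * (∑ i, (l₁ i + l₂ i)) +
        ((∑ i, (l₁ i) ^ 2) + ∑ i, (l₂ i) ^ 2) / (8 * s ^ 2 * (1 + p) ^ 2) +
        (1 / 4) * ∑ i, (Real.log (1 + l₁ i / s) + Real.log (1 + l₂ i / s))) :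
    K ≥ c₄ * m - (l₁ 0 * l₂ 0 / (4 * s ^ 2 * (1 + p) ^ 2)) *
          (U₁ᵀ * U₂ * U₂ᵀ * U₁).trace - c₅ ∧
      (1 / 2) * Real.exp (-K) ≤
        (1 / 2) * Real.exp (-(c₄ * m) +
          (l₁ 0 * l₂ 0 / (4 * s ^ 2 * (1 + p) ^ 2)) *
            (U₁ᵀ * U₂ * U₂ᵀ * U₁).trace + c₅) := by
  set μ := hDh.eigenvalues
  set A₁ := U₁ * diagonal l₁ * U₁ᵀ
  set A₂ := U₂ * diagonal l₂ * U₂ᵀ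
  have hmean : (2⁻¹ : ℝ) • (S₁ + S₂) = s • (1 + D) := by
    rw [hS₁, hS₂, hD]
    match_scalars <;> field_simp
    norm_num
  have hK' : K = 1 / 2 * ∑ i, log (1 + μ i) -
      1 / 4 * (∑ i, log (1 + l₁ i / s) + ∑ i, log (1 + l₂ i / s)) := by
    have hμ : ∀ i, 1 + μ i ≠ 0 := fun i ↦ by
      by_cases h : μ i = 0
      · simp [h]
      · linarith [(heig i h).1]
    have hdet : (1 + D).det = ∏ i, (1 + μ i) := by simpa using hDh.det_one_add
    rw [hK, hmean, det_smul, hdet, Real.log_pow_mul_prod hs.ne' _ hμ, hS₁, hS₂,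
      log_det_mul_diagonal_mul_transpose_add_smul_one hU₁ hl₁0 hs,
      log_det_mul_diagonal_mul_transpose_add_smul_one hU₂ hl₂0 hs]
    ring
  have htrace : ∑ i, μ i = (2 * s)⁻¹ * (∑ i, l₁ i + ∑ i, l₂ i) := by
    rw [show ∑ i, μ i = D.trace by simpa using hDh.trace_eq_sum_eigenvalues.symm, hD,
      trace_smul, trace_add, trace_mul_diagonal_mul_transpose hU₁,
      trace_mul_diagonal_mul_transpose hU₂, smul_eq_mul]
  have htrace_sq : ∑ i, μ i ^ 2 =
      (2 * s)⁻¹ ^ 2 * (∑ i, l₁ i ^ 2 + ∑ i, l₂ i ^ 2 + 2 * (A₁ * A₂).trace) := by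
    have hsq : D * D = (2 * s)⁻¹ ^ 2 • (A₁ * A₁ + A₂ * A₂ + A₁ * A₂ + A₂ * A₁) := by
      rw [hD, smul_mul_smul]; noncomm_ring
    rw [show ∑ i, μ i ^ 2 = (D * D).trace by simpa using hDh.trace_mul_self.symm, hsq,
      trace_smul, trace_add, trace_add, trace_add, trace_mul_comm A₂ A₁,
      mul_diagonal_mul_transpose_mul_self hU₁, mul_diagonal_mul_transpose_mul_self hU₂,
      trace_mul_diagonal_mul_transpose hU₁, trace_mul_diagonal_mul_transpose hU₂, smul_eq_mul]
    ring
  have hcross : (A₁ * A₂).trace ≤ l₁ 0 * l₂ 0 * (U₁ᵀ * U₂ * U₂ᵀ * U₁).trace := by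
    have hgram : U₁ᵀ * U₂ * U₂ᵀ * U₁ = U₁ᵀ * U₂ * (U₁ᵀ * U₂)ᵀ := by
      simp [transpose_mul, Matrix.mul_assoc]
    rw [trace_mul_transpose_mul_mul_transpose, hgram]
    exact trace_diagonal_mul_mul_diagonal_mul_transpose_le hl₁0 hl₁max hl₂0 hl₂max _
  have hbound : K ≥ c₄ * m - (l₁ 0 * l₂ 0 / (4 * s ^ 2 * (1 + p) ^ 2)) *
      (U₁ᵀ * U₂ * U₂ᵀ * U₁).trace - c₅ := by
    have hlower := le_sum_log_one_add (by linarith : 1 + p ≠ 0) hlog heig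
    have hcross' := div_le_div_of_nonneg_right hcross
      (by positivity : (0 : ℝ) ≤ 4 * s ^ 2 * (1 + p) ^ 2)
    rw [htrace, htrace_sq, ← hm] at hlower
    rw [hK', hc₄, hc₅, Finset.sum_add_distrib, Finset.sum_add_distrib]
    -- `ring` does not split the inverse of the sum `1 + p`; make it an atom
    generalize 1 + p = r at hlower hcross' ⊢
    linear_combination (1 / 2 : ℝ) * hlower + hcross'
  exact ⟨hbound, by gcongr; linarith⟩

/-- Moderate-SNR bound on the Bhattacharyya exponent `K`.  Here `s` plays the
role of the noise variance `σ²`, `l₁ 0` (resp. `l₂ 0`) is the largest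
eigenvalue of `Λ₁` (resp. `Λ₂`), and `m` is the number of nonzero eigenvalues
of `D` counted with multiplicity. -/
theorem stmt_11 {n d : ℕ} (U₁ U₂ : Matrix (Fin n) (Fin (d + 1)) ℝ)
    (hU₁ : U₁ᵀ * U₁ = 1) (hU₂ : U₂ᵀ * U₂ = 1)
    (l₁ l₂ : Fin (d + 1) → ℝ)
    (hl₁0 : ∀ i, 0 ≤ l₁ i) (hl₂0 : ∀ i, 0 ≤ l₂ i)
    (hl₁max : ∀ i, l₁ i ≤ l₁ 0) (hl₂max : ∀ i, l₂ i ≤ l₂ 0)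
    (s : ℝ) (hs : 0 < s)
    (S₁ S₂ D : Matrix (Fin n) (Fin n) ℝ)
    (hS₁ : S₁ = U₁ * Matrix.diagonal l₁ * U₁ᵀ + s • 1)
    (hS₂ : S₂ = U₂ * Matrix.diagonal l₂ * U₂ᵀ + s • 1)
    (hD : D = (2 * s)⁻¹ • (U₁ * Matrix.diagonal l₁ * U₁ᵀ + U₂ * Matrix.diagonal l₂ * U₂ᵀ))
    (hDh : D.IsHermitian)
    (m : ℕ)
    (hm : m = (Finset.univ.filter (fun i => hDh.eigenvalues i ≠ 0)).card)
    (p L : ℝ) (hp : 1 < p) (hL0 : 0 ≤ L) (hL : L < (p - 1) / 2)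
    (hlog : ∀ l ∈ Set.Icc L p,
        Real.log (1 + l) ≥
          Real.log (1 + p) + (l - p) / (1 + p) - (l - p) ^ 2 / (1 + p) ^ 2)
    (heig : ∀ i, hDh.eigenvalues i ≠ 0 → hDh.eigenvalues i ∈ Set.Icc L p)
    (K c₄ c₅ : ℝ)
    (hK : K = (1 / 2) * Real.log ((((2:ℝ)⁻¹) • (S₁ + S₂)).det) -
        (1 / 4) * (Real.log S₁.det + Real.log S₂.det))
    (hc₄ : c₄ = (1 / 2) * (Real.log (1 + p) - p / (1 + p) - p ^ 2 / (1 + p) ^ 2))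
    (hc₅ : c₅ = -((1 + 3 * p) / (4 * s * (1 + p) ^ 2)) * (∑ i, (l₁ i + l₂ i)) +
        ((∑ i, (l₁ i) ^ 2) + ∑ i, (l₂ i) ^ 2) / (8 * s ^ 2 * (1 + p) ^ 2) +
        (1 / 4) * ∑ i, (Real.log (1 + l₁ i / s) + Real.log (1 + l₂ i / s))) :
    K ≥ c₄ * m - (l₁ 0 * l₂ 0 / (4 * s ^ 2 * (1 + p) ^ 2)) *
          (U₁ᵀ * U₂ * U₂ᵀ * U₁).trace - c₅ ∧
      (1 / 2) * Real.exp (-K) ≤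
        (1 / 2) * Real.exp (-(c₄ * m) +
          (l₁ 0 * l₂ 0 / (4 * s ^ 2 * (1 + p) ^ 2)) *
            (U₁ᵀ * U₂ * U₂ᵀ * U₁).trace + c₅) :=
  stmt_11_general U₁ U₂ hU₁ hU₂ l₁ l₂ hl₁0 hl₂0 hl₁max hl₂max s hs S₁ S₂ D hS₁ hS₂ hD hDh m hm p L
    hp hL0 hlog heig K c₄ c₅ hK hc₄ hc₅
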